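/- arXiv:math/0509707 — 2 statements merged into one kernel-verified Lean document; each statement's English description precedes it below -/
import Mathlib

section
/- Assume the independence axioms, Dominance, and existence of stationary types, and fix models M ⊆ N. Order decompositions of N over M by: ⟨M_η, a_η : η ∈ I⟩ ⪯ ⟨N_η, b_η : η ∈ J⟩ iff I ⊆ J and M_η = N_η and a_η = b_η for all η ∈ I. Then the union of any ⪯-increasing chain of decompositions of N over M is again a decomposition of N over M; in particular the set of decompositions of N over M is inductive. -/
universe u

/-- An abstract independence frame on subsets of a monster set `α`, as in the
axiomatic framework of Grossberg–Lessmann: a class of models, a ternary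
independence relation satisfying Definition, Finite Character, Monotonicity,
Local Character, Transitivity and Symmetry over models, together with
primary models and the Dominance axiom. -/
structure IndepFrame (α : Type u) where
  /-- the distinguished class of models (subsets of the monster) -/
  Model : Set α → Prop
  /-- `indep A B C` means `A ⫝_B C` -/
  indep : Set α → Set α → Set α → Prop
  /-- `Primary N A` means `N` is a primary model over the set `A` -/
  Primary : Set α → Set α → Prop
  indep_defn : ∀ A B C : Set α, indep A B C ↔ indep A B (B ∪ C)
  indep_finChar : ∀ A B C : Set α, indep A B C ↔
    ∀ A' C' : Set α, A' ⊆ A → C' ⊆ C → A'.Finite → C'.Finite → indep A' B C'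
  indep_mono : ∀ A B B₁ C C' : Set α, indep A B C → B ⊆ B₁ → B₁ ⊆ B ∪ C → C' ⊆ C →
    indep A B₁ C'
  indep_localChar : ∀ M : ℕ → Set α, (∀ i, Model (M i)) → Monotone M →
    ∀ a : Set α, a.Finite → ∃ i, indep a (M i) (⋃ j, M j)
  indep_trans : ∀ A M₀ M₁ C : Set α, Model M₀ → Model M₁ → M₀ ⊆ M₁ → M₁ ⊆ C →
    ((indep A M₁ C ∧ indep A M₀ M₁) ↔ indep A M₀ C)
  indep_symm : ∀ A M C : Set α, Model M → (indep A M C ↔ indep C M A)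
  primary_model : ∀ N A : Set α, Primary N A → Model N
  primary_superset : ∀ N A : Set α, Primary N A → A ⊆ N
  primary_exists : ∀ M a : Set α, Model M → a.Finite → ∃ N, Primary N (M ∪ a)
  dominance : ∀ A M C N : Set α, Model M → indep A M C → Primary N (M ∪ C) →
    indep A M N

/-- An independence frame enriched with Galois types over models: each type has
a domain (a model), a realization relation on finite tuples, the type map
`tp`, free (nonforking) extensions witnessing stationarity of nonalgebraic
types, and restrictions. -/
structure GFrame (α : Type u) extends IndepFrame α where
  /-- the collection of Galois types over models -/
  Ty : Type u
  /-- the domain (a model) of a type -/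
  dom : Ty → Set α
  /-- `real l p`: the finite tuple `l` realizes the type `p` -/
  real : List α → Ty → Prop
  /-- `tp l M`: the Galois type of the finite tuple `l` over the model `M` -/
  tp : List α → Set α → Ty
  /-- `fext p N`: the free extension `p_N` of `p` to the model `N ⊇ dom p` -/
  fext : Ty → Set α → Ty
  /-- `res p N`: the restriction `p ↾ N` of `p` to the model `N ⊆ dom p` -/
  res : Ty → Set α → Ty
  dom_model : ∀ p : Ty, Model (dom p)
  tp_dom : ∀ (l : List α) (M : Set α), Model M → dom (tp l M) = M
  tp_self : ∀ (l : List α) (M : Set α), Model M → real l (tp l M)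
  real_tp_iff : ∀ (l l' : List α) (M : Set α), Model M →
    (real l' (tp l M) ↔ tp l' M = tp l M)
  real_exists : ∀ p : Ty, ∃ l, real l p
  fext_dom : ∀ (p : Ty) (N : Set α), Model N → dom p ⊆ N → dom (fext p N) = N
  fext_extends : ∀ (p : Ty) (N : Set α), Model N → dom p ⊆ N →
    ∀ l, real l (fext p N) → real l p
  fext_free : ∀ (p : Ty) (N : Set α), Model N → dom p ⊆ N →
    (∀ l, real l p → ¬ ∀ x ∈ l, x ∈ dom p) →
    ∀ l, real l (fext p N) → indep {x | x ∈ l} (dom p) N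
  fext_unique : ∀ (p q : Ty) (N : Set α), Model N → dom p ⊆ N →
    (∀ l, real l p → ¬ ∀ x ∈ l, x ∈ dom p) → dom q = N →
    (∀ l, real l q → real l p) →
    (∀ l, real l q → indep {x | x ∈ l} (dom p) N) → q = fext p N
  res_dom : ∀ (p : Ty) (N : Set α), Model N → N ⊆ dom p → dom (res p N) = N
  res_real : ∀ (p : Ty) (N : Set α), Model N → N ⊆ dom p →
    ∀ l, real l p → real l (res p N)
  res_tp : ∀ (l : List α) (M N : Set α), Model M → Model N → N ⊆ M →
    res (tp l M) N = tp l N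

namespace GFrame

variable {α : Type u} (F : GFrame α)

/-- A type is nonalgebraic (equivalently, stationary) if no realization of it
lies inside its domain. -/
def Nonalg (p : F.Ty) : Prop := ∀ l, F.real l p → ¬ ∀ x ∈ l, x ∈ F.dom p

/-- `p` is based on `N ⊆ dom p`: every realization of `p` is independent from
`dom p` over `N`. -/
def Based (p : F.Ty) (N : Set α) : Prop :=
  N ⊆ F.dom p ∧ ∀ l, F.real l p → F.indep {x | x ∈ l} N (F.dom p)

/-- Orthogonality `p ⊥ q`: for every model `M₁` containing `dom p ∪ dom q` and
all realizations `a ⊨ p_{M₁}`, `b ⊨ q_{M₁}`, we have `a ⫝_{dom p} b`. -/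
def Perp (p q : F.Ty) : Prop :=
  ∀ M₁ : Set α, F.Model M₁ → F.dom p ⊆ M₁ → F.dom q ⊆ M₁ →
    ∀ la lb : List α, F.real la (F.fext p M₁) → F.real lb (F.fext q M₁) →
      F.indep {x | x ∈ la} (F.dom p) {x | x ∈ lb}

/-- `p ⊥ M`: `p` is orthogonal to every stationary (= nonalgebraic) type over `M`. -/
def PerpM (p : F.Ty) (M : Set α) : Prop :=
  ∀ q : F.Ty, F.dom q = M → F.Nonalg q → F.Perp p q

/-- `p` is realized in the set `S`. -/
def RealizedIn (p : F.Ty) (S : Set α) : Prop :=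
  ∃ l, F.real l p ∧ ∀ x ∈ l, x ∈ S

/-- `M₁/M₀ ⊥ M₂`: every type over `M₀` realized in `M₁` is orthogonal to `M₂`. -/
def QPerp (M₁ M₀ M₂ : Set α) : Prop :=
  ∀ p : F.Ty, F.dom p = M₀ → F.RealizedIn p M₁ → F.PerpM p M₂

/-- `p` is regular: `p` is stationary, and for every model `N ⊆ dom p` on which
`p` is based and every type `q` over a model `M₁ ⊇ dom p` extending `p ↾ N`,
either `q = p_{M₁}` or `q ⊥ p`. -/
def Regular (p : F.Ty) : Prop :=
  F.Nonalg p ∧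
  ∀ N : Set α, F.Model N → N ⊆ F.dom p → F.Based p N →
    ∀ (M₁ : Set α) (q : F.Ty), F.Model M₁ → F.dom p ⊆ M₁ → F.dom q = M₁ →
      (∀ l, F.real l q → F.real l (F.res p N)) →
      (q = F.fext p M₁ ∨ F.Perp q p)

end GFrame

/-- A tree: a set of finite sequences closed under initial segments. -/
def IsTree {β : Type u} (I : Set (List β)) : Prop :=
  ∀ l ∈ I, ∀ l' : List β, l' <+: l → l' ∈ I

/-- A system of models indexed by a tree: `Ms η ⊆ Ms ν` whenever `η` is an
initial segment of `ν`. -/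
def IndepFrame.IsSystem {α β : Type u} (F : IndepFrame α) (I : Set (List β))
    (Ms : List β → Set α) : Prop :=
  (∀ η ∈ I, F.Model (Ms η)) ∧ ∀ η ∈ I, ∀ ν ∈ I, η <+: ν → Ms η ⊆ Ms ν

/-- An independent system: `M_η ⫝_{M_{η⁻}} ∪{M_ν : η is not an initial segment of ν}`
for every nonempty `η ∈ I`. -/
def IndepFrame.IsIndepSystem {α β : Type u} (F : IndepFrame α) (I : Set (List β))
    (Ms : List β → Set α) : Prop :=
  F.IsSystem I Ms ∧
  ∀ η ∈ I, η ≠ [] →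
    F.indep (Ms η) (Ms η.dropLast) (⋃ ν ∈ {ν ∈ I | ¬ η <+: ν}, Ms ν)

/-- `⟨M_η, a_η : η ∈ I⟩` is a decomposition of `N` over `M`: `I` is a tree
containing the root, `⟨M_η⟩` is a system of models inside `N` with
`M_{⟨⟩} = M`; for nonempty `η`, `M_η` is primary over `M_{η⁻} ∪ {a_η}` and
`tp(a_η/M_{η⁻})` is regular; the immediate successors of each node `ν` form a
family independent over `M_ν`; and `M_η/M_{η⁻} ⊥ M_{η⁻⁻}` whenever `η⁻⁻`
exists. -/
def GFrame.IsDecomposition {α β : Type u} (F : GFrame α) (N M : Set α)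
    (I : Set (List β)) (Ms : List β → Set α) (a : List β → α) : Prop :=
  IsTree I ∧ ([] : List β) ∈ I ∧
  F.toIndepFrame.IsSystem I Ms ∧
  (∀ η ∈ I, Ms η ⊆ N) ∧ Ms ([] : List β) = M ∧
  (∀ η ∈ I, η ≠ [] → F.Primary (Ms η) (Ms η.dropLast ∪ {a η})) ∧
  (∀ η ∈ I, η ≠ [] → F.Regular (F.tp [a η] (Ms η.dropLast))) ∧
  (∀ ν ∈ I, ∀ η ∈ I, η ≠ [] → η.dropLast = ν →
    F.indep (Ms η) (Ms ν)
      (⋃ ρ ∈ {ρ ∈ I | ρ ≠ [] ∧ ρ.dropLast = ν ∧ ρ ≠ η}, Ms ρ)) ∧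
  (∀ η ∈ I, η ≠ [] → η.dropLast ≠ [] →
    F.QPerp (Ms η) (Ms η.dropLast) (Ms η.dropLast.dropLast))

/-- The union of a `⪯`-increasing chain of decompositions of `N` over `M`
(ordered by `I ⊆ J` together with agreement of the models and elements on `I`)
is again a decomposition of `N` over `M`; hence the set of decompositions of
`N` over `M` is inductive. -/
theorem stmt14 {α β : Type u} (F : GFrame α) (M N : Set α)
    (hM : F.Model M) (hN : F.Model N) (hMN : M ⊆ N)
    {ι : Type u} [LinearOrder ι] [Nonempty ι]
    (I : ι → Set (List β)) (Ms : ι → List β → Set α) (a : ι → List β → α)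
    (hdec : ∀ k : ι, F.IsDecomposition N M (I k) (Ms k) (a k))
    (hchain : ∀ k l : ι, k ≤ l →
      I k ⊆ I l ∧ ∀ η ∈ I k, Ms k η = Ms l η ∧ a k η = a l η) :
    ∃ (Ms' : List β → Set α) (a' : List β → α),
      (∀ k : ι, ∀ η ∈ I k, Ms' η = Ms k η ∧ a' η = a k η) ∧
      F.IsDecomposition N M (⋃ k, I k) Ms' a' := by
  classical
  obtain ⟨j₀⟩ := (inferInstance : Nonempty ι)
  have agree : ∀ k l η, η ∈ I k → η ∈ I l → Ms k η = Ms l η ∧ a k η = a l η := by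
    intro k l η hk hl
    rcases le_total k l with h | h
    · exact (hchain k l h).2 η hk
    · obtain ⟨h1, h2⟩ := (hchain l k h).2 η hl
      exact ⟨h1.symm, h2.symm⟩
  set Ms' : List β → Set α :=
    fun η => if h : ∃ k, η ∈ I k then Ms h.choose η else ∅ with hMs'def
  set a' : List β → α :=
    fun η => if h : ∃ k, η ∈ I k then a h.choose η else a j₀ [] with ha'def
  have hMs' : ∀ k η, η ∈ I k → Ms' η = Ms k η := by
    intro k η hk
    have h : ∃ k, η ∈ I k := ⟨k, hk⟩
    simp only [hMs'def, dif_pos h]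
    exact (agree h.choose k η h.choose_spec hk).1
  have ha' : ∀ k η, η ∈ I k → a' η = a k η := by
    intro k η hk
    have h : ∃ k, η ∈ I k := ⟨k, hk⟩
    simp only [ha'def, dif_pos h]
    exact (agree h.choose k η h.choose_spec hk).2
  have hmem : ∀ η, η ∈ (⋃ k, I k) → ∃ k, η ∈ I k := fun η hη => Set.mem_iUnion.1 hη
  have htreek : ∀ k, IsTree (I k) := fun k => (hdec k).1
  have hdrop : ∀ (η : List β), η.dropLast <+: η := fun η => List.dropLast_prefix η
  refine ⟨Ms', a', fun k η hη => ⟨hMs' k η hη, ha' k η hη⟩,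
    ?_, ?_, ⟨?_, ?_⟩, ?_, ?_, ?_, ?_, ?_, ?_⟩
  · -- tree
    intro l hl l' hp
    obtain ⟨k, hk⟩ := hmem l hl
    exact Set.mem_iUnion.2 ⟨k, htreek k l hk l' hp⟩
  · -- root
    exact Set.mem_iUnion.2 ⟨j₀, (hdec j₀).2.1⟩
  · -- system: models
    intro η hη
    obtain ⟨k, hk⟩ := hmem η hη
    rw [hMs' k η hk]
    exact (hdec k).2.2.1.1 η hk
  · -- system: monotone
    intro η hη ν hν hp
    obtain ⟨k, hk⟩ := hmem ν hν
    have hηk : η ∈ I k := htreek k ν hk η hp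
    rw [hMs' k η hηk, hMs' k ν hk]
    exact (hdec k).2.2.1.2 η hηk ν hk hp
  · -- contained in N
    intro η hη
    obtain ⟨k, hk⟩ := hmem η hη
    rw [hMs' k η hk]
    exact (hdec k).2.2.2.1 η hk
  · -- root is M
    rw [hMs' j₀ [] (hdec j₀).2.1]
    exact (hdec j₀).2.2.2.2.1
  · -- primary
    intro η hη hne'
    obtain ⟨k, hk⟩ := hmem η hη
    have hdk : η.dropLast ∈ I k := htreek k η hk _ (hdrop η)
    rw [hMs' k η hk, hMs' k η.dropLast hdk, ha' k η hk]
    exact (hdec k).2.2.2.2.2.1 η hk hne'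
  · -- regular
    intro η hη hne'
    obtain ⟨k, hk⟩ := hmem η hη
    have hdk : η.dropLast ∈ I k := htreek k η hk _ (hdrop η)
    rw [hMs' k η.dropLast hdk, ha' k η hk]
    exact (hdec k).2.2.2.2.2.2.1 η hk hne'
  · -- independent families
    intro ν hν η hη hne' hdη
    refine (F.toIndepFrame.indep_finChar _ _ _).2 ?_
    intro A' C' hA' hC' hAf hCf
    obtain ⟨kη, hkη⟩ := hmem η hη
    have hx : ∀ x ∈ C', ∃ k ρ, ρ ∈ I k ∧ ρ ≠ [] ∧ ρ.dropLast = ν ∧ ρ ≠ η ∧ x ∈ Ms k ρ := by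
      intro x hxC
      obtain ⟨ρ, hρ, hxρ⟩ := Set.mem_iUnion₂.1 (hC' hxC)
      obtain ⟨hρU, h1, h2, h3⟩ := hρ
      obtain ⟨k, hk⟩ := hmem ρ hρU
      rw [hMs' k ρ hk] at hxρ
      exact ⟨k, ρ, hk, h1, h2, h3, hxρ⟩
    choose! f g hg1 hg2 hg3 hg4 hg5 using hx
    have hfin : (insert kη (f '' C')).Finite := (hCf.image f).insert kη
    obtain ⟨K, hK⟩ := hfin.bddAbove
    have hKη : kη ≤ K := hK (Set.mem_insert _ _)
    have hηK : η ∈ I K := (hchain kη K hKη).1 hkη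
    have hνK : ν ∈ I K := htreek K η hηK ν (hdη ▸ hdrop η)
    have Hind := (hdec K).2.2.2.2.2.2.2.1 ν hνK η hηK hne' hdη
    have hC2 : C' ⊆ ⋃ ρ ∈ {ρ ∈ I K | ρ ≠ [] ∧ ρ.dropLast = ν ∧ ρ ≠ η}, Ms K ρ := by
      intro x hxC
      have hfK : f x ≤ K := hK (Set.mem_insert_of_mem _ ⟨x, hxC, rfl⟩)
      have hgK : g x ∈ I K := (hchain (f x) K hfK).1 (hg1 x hxC)
      refine Set.mem_iUnion₂.2 ⟨g x, ⟨hgK, hg2 x hxC, hg3 x hxC, hg4 x hxC⟩, ?_⟩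
      rw [← (agree (f x) K (g x) (hg1 x hxC) hgK).1]
      exact hg5 x hxC
    have hA2 : A' ⊆ Ms K η := by rw [← hMs' K η hηK]; exact hA'
    rw [hMs' K ν hνK]
    exact (F.toIndepFrame.indep_finChar _ _ _).1 Hind A' C' hA2 hC2 hAf hCf
  · -- QPerp
    intro η hη hne' hdne
    obtain ⟨k, hk⟩ := hmem η hη
    have hdk : η.dropLast ∈ I k := htreek k η hk _ (hdrop η)
    have hddk : η.dropLast.dropLast ∈ I k := htreek k _ hdk _ (hdrop _)
    rw [hMs' k η hk, hMs' k η.dropLast hdk, hMs' k η.dropLast.dropLast hddk]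
    exact (hdec k).2.2.2.2.2.2.2.2 η hk hne' hdne
end

section
/- Suppose 𝔠 is strongly ℵ₀-homogeneous in the sense that for all finite tuples ē, f̄, ḡ from 𝔠 with tp(f̄/ē) = tp(ḡ/ē), there is an automorphism of 𝔠 fixing ē pointwise and mapping f̄ to ḡ. Let A ⊆ B ⊆ 𝔠 be such that every complete type over a finite subset of A that is realized in B is realized in A. Let c̄ be a finite tuple from 𝔠 such that for some finite tuple ā from A, every realization of tp(c̄/ā) in 𝔠 realizes tp(c̄/A). Then every realization of tp(c̄/A) in 𝔠 realizes tp(c̄/B). -/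
universe u v

open FirstOrder

/-- Two finite tuples `b, b'` have the same complete first-order type over the
parameters `m` (computed in the ambient structure `C`). -/
def EqType (L : Language) {C : Type u} [L.Structure C] {n : ℕ} {ρ : Type v}
    (b b' : Fin n → C) (m : ρ → C) : Prop :=
  ∀ φ : L.Formula (Fin n ⊕ ρ),
    φ.Realize (Sum.elim b m) ↔ φ.Realize (Sum.elim b' m)

/-- `c` and `c'` have the same complete type over the (possibly infinite)
parameter set `A`, i.e. `c'` realizes `tp(c/A)`. -/
def SameTypeOver (L : Language) {C : Type u} [L.Structure C] {n : ℕ}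
    (c c' : Fin n → C) (A : Set C) : Prop :=
  ∀ (k : ℕ) (m : Fin k → C), (∀ i, m i ∈ A) → EqType L c c' m

/-- Suppose the monster `C` is strongly `ℵ₀`-homogeneous.  Let `A ⊆ B ⊆ C` be
such that every type over a finite subset of `A` realized in `B` is realized
in `A`.  Let `c̄` be a finite tuple such that, for some finite tuple `ā` from
`A`, every realization of `tp(c̄/ā)` realizes `tp(c̄/A)`.  Then every
realization of `tp(c̄/A)` realizes `tp(c̄/B)`. -/
theorem stmt16 {L : Language} {C : Type u} [L.Structure C]
    (hhom : ∀ (ke nf : ℕ) (e : Fin ke → C) (f g : Fin nf → C),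
      EqType L f g e →
      ∃ σ : C ≃[L] C, (∀ i, σ (e i) = e i) ∧ ∀ i, σ (f i) = g i)
    (A B : Set C) (hAB : A ⊆ B)
    (hTV : ∀ (n' k : ℕ) (m : Fin k → C) (b : Fin n' → C),
      (∀ i, m i ∈ A) → (∀ i, b i ∈ B) →
      ∃ b' : Fin n' → C, (∀ i, b' i ∈ A) ∧ EqType L b b' m)
    {n na : ℕ} (c : Fin n → C) (a : Fin na → C) (ha : ∀ i, a i ∈ A)
    (hiso : ∀ c' : Fin n → C, EqType L c c' a → SameTypeOver L c c' A) :
    ∀ c' : Fin n → C, SameTypeOver L c c' A → SameTypeOver L c c' B := by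
  intro c' hA k m hmB φ
  obtain ⟨m', hm'A, hEq⟩ := hTV k na a m ha hmB
  obtain ⟨σ, hσa, hσm⟩ := hhom na k a m m' hEq
  -- moving by σ preserves formulas
  have key : ∀ (x : Fin n → C),
      φ.Realize (Sum.elim x m) ↔ φ.Realize (Sum.elim (σ ∘ x) m') := by
    intro x
    have h : Sum.elim (σ ∘ x) m' = σ ∘ Sum.elim x m := by
      funext j; cases j with
      | inl i => simp
      | inr i => simp [hσm i]
    rw [h, Language.StrongHomClass.realize_formula σ]
  -- σ fixes a, so σ∘x has the same type over a as x
  have fixaux : ∀ (x : Fin n → C), EqType L x (σ ∘ x) a := by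
    intro x ψ
    have h : Sum.elim (σ ∘ x) a = σ ∘ Sum.elim x a := by
      funext j; cases j with
      | inl i => simp
      | inr i => simp [hσa i]
    rw [h, Language.StrongHomClass.realize_formula σ]
  have htpc : EqType L c (σ ∘ c) a := fixaux c
  have htpc' : EqType L c (σ ∘ c') a := by
    intro ψ
    exact (hA na a ha ψ).trans (fixaux c' ψ)
  have h1 := hiso (σ ∘ c) htpc k m' hm'A φ
  have h2 := hiso (σ ∘ c') htpc' k m' hm'A φ
  rw [key c, key c']
  exact h1.symm.trans h2
end
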